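/- arXiv:1604.05755 — 3 statements merged into one kernel-verified Lean document; each statement's English description precedes it below -/
import Mathlib

section
/- Let g ∈ G_n, h ∈ G_k and let λ be a partial bijection from {0,…,k−1} to {0,…,n−1} with rk λ = d. If (s,t) and (s′,t′) are two realizations of λ, then the elements (s g s⁻¹)(t h t⁻¹) and (s′ g s′⁻¹)(t′ h t′⁻¹) both lie in G_{n+k−d} and are K_{n+k−d}-conjugate; that is, the K_{n+k−d}-conjugacy class of g ⊛_λ h does not depend on the choice of realization. -/
noncomputable section

/-- Embedding of permutations of `ℕ` into permutations of `V = X ⊕ (I × ℕ)`,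
acting trivially on `X` and on the first factor of `I × ℕ`.  It restricts to an
embedding of `S_∞` into `S(V)`. -/
def embNat (I X : Type*) (τ : Equiv.Perm ℕ) : Equiv.Perm (X ⊕ I × ℕ) :=
  Equiv.sumCongr (Equiv.refl X) (Equiv.prodCongr (Equiv.refl I) τ)

/-- `τ` fixes every `m ≥ n`, i.e. `τ` belongs to the subgroup `S_n ≤ S_∞`. -/
def fixesFrom (n : ℕ) (τ : Equiv.Perm ℕ) : Prop := ∀ m : ℕ, n ≤ m → τ m = m

/-- `G_n`: the set of elements of `G_∞` fixing every point of `V ∖ V_n`. -/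
def Gset {I X : Type*} (Ginf : Subgroup (Equiv.Perm (X ⊕ I × ℕ))) (n : ℕ) :
    Set (Equiv.Perm (X ⊕ I × ℕ)) :=
  {g | g ∈ Ginf ∧ ∀ (i : I) (m : ℕ), n ≤ m → g (Sum.inr (i, m)) = Sum.inr (i, m)}

/-- `K_n`-conjugacy of elements of `S(V)`:  `g' = κ g κ⁻¹` for some `κ ∈ K_n`,
where `K_n` is the image of `S_n` in `S(V)`. -/
def Kconj {I X : Type*} (n : ℕ) (g g' : Equiv.Perm (X ⊕ I × ℕ)) : Prop :=
  ∃ τ : Equiv.Perm ℕ, fixesFrom n τ ∧ g' = embNat I X τ * g * (embNat I X τ)⁻¹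

/-- A permutation of `Fin N` extended to `ℕ` and then to `V`; these elements
form exactly the subgroup `K_N ≤ S(V)`. -/
def embFin (I X : Type*) (N : ℕ) (σ : Equiv.Perm (Fin N)) : Equiv.Perm (X ⊕ I × ℕ) :=
  embNat I X (σ.extendDomain Fin.equivSubtype)

/-- The element `A_N[j,g] = (1/(N−j)!) Σ_{τ ∈ K_N} τ g τ⁻¹` of `ℂ[G_∞]`
(and `A_N[j,g] = 0` for `j > N`). -/
def AN (I X : Type*) (N j : ℕ) (g : Equiv.Perm (X ⊕ I × ℕ)) :
    MonoidAlgebra ℂ (Equiv.Perm (X ⊕ I × ℕ)) :=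
  if j ≤ N then
    ((Nat.factorial (N - j) : ℂ))⁻¹ •
      ∑ σ : Equiv.Perm (Fin N),
        MonoidAlgebra.of ℂ (Equiv.Perm (X ⊕ I × ℕ))
          (embFin I X N σ * g * (embFin I X N σ)⁻¹)
  else 0


/-- A partial bijection from `{0,…,k−1}` to `{0,…,n−1}`, encoded as a function
`Fin k → Option (Fin n)` (so each point of the domain has at most one image) which is
injective where defined. -/
def PB (k n : ℕ) : Type :=
  {f : Fin k → Option (Fin n) // ∀ (i i' : Fin k) (j : Fin n),
    f i = some j → f i' = some j → i = i'}

/-- The rank of a partial bijection: the cardinality of its domain. -/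
def PB.rank {k n : ℕ} (L : PB k n) : ℕ :=
  (Finset.univ.filter fun i => (L.val i).isSome).card

/-- A realization of a partial bijection `λ` from `{0,…,k−1}` to `{0,…,n−1}` of rank `d`:
a pair `(σs, σt)` of permutations of `ℕ` belonging to `S_{n+k−d}` (i.e. elements of
`K_{n+k−d}` in terms of their images in `S(V)`), restricting to injections of `{0,…,n−1}`
resp. `{0,…,k−1}` into `{0,…,n+k−d−1}`, and satisfying `σt(i) = σs(j) ↔ λ(i) = j`. -/
def IsRealization (n k : ℕ) (L : PB k n) (σs σt : Equiv.Perm ℕ) : Prop :=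
  fixesFrom (n + k - L.rank) σs ∧ fixesFrom (n + k - L.rank) σt ∧
    (∀ j : Fin n, σs (j : ℕ) < n + k - L.rank) ∧
    (∀ i : Fin k, σt (i : ℕ) < n + k - L.rank) ∧
    (∀ (i : Fin k) (j : Fin n), σt (i : ℕ) = σs (j : ℕ) ↔ L.val i = some j)

/-!
Put `N = n + k − d`. Each realization is injective on `{0,…,n−1}` and on `{0,…,k−1}`, and by
the condition `σt i = σs j ↔ λ i = j` two realizations of `λ` identify exactly the same pairs
of points. Hence `σs j ↦ σs' j`, `σt i ↦ σt' i` is a well-defined bijection between subsets of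
`{0,…,N−1}`; extend it to some `κ ∈ S_N`. Then `σs'⁻¹ κ σs` fixes `{0,…,n−1}`, so its image in
`S(V)` has support disjoint from that of `g` and commutes with `g`; hence `κ` conjugates
`s g s⁻¹` to `s' g s'⁻¹`, and likewise `t h t⁻¹` to `t' h t'⁻¹`.
-/

open Equiv

theorem conj_conj_eq_of_commute {G : Type*} [Group G] {κ σ σ' g : G}
    (h : Commute (σ'⁻¹ * κ * σ) g) : κ * (σ * g * σ⁻¹) * κ⁻¹ = σ' * g * σ'⁻¹ :=
  calc κ * (σ * g * σ⁻¹) * κ⁻¹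
      = σ' * ((σ'⁻¹ * κ * σ) * g * (σ'⁻¹ * κ * σ)⁻¹) * σ'⁻¹ := by group
    _ = σ' * g * σ'⁻¹ := by rw [h.eq, mul_inv_cancel_right]

theorem exists_perm_apply_eq_of_ker_eq {α β : Type*} {f f' : α → β}
    (hker : ∀ a b, f a = f b ↔ f' a = f' b) {s : Set β} (hs : s.Finite)
    (hf : ∀ a, f a ∈ s) (hf' : ∀ a, f' a ∈ s) :
    ∃ κ : Perm β, (∀ a, κ (f a) = f' a) ∧ ∀ y ∉ s, κ y = y := by
  classical
  have := hs.to_subtype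
  let fs : α → s := fun a => ⟨f a, hf a⟩
  let fs' : α → s := fun a => ⟨f' a, hf' a⟩
  let e : Set.range fs ≃ Set.range fs' :=
    (Setoid.quotientKerEquivRange fs).symm.trans
      ((Quotient.congrRight fun a b => by simp [Setoid.ker_def, fs, fs', hker]).trans
        (Setoid.quotientKerEquivRange fs'))
  have he : ∀ a, e ⟨fs a, a, rfl⟩ = ⟨fs' a, a, rfl⟩ := fun a => by
    have hq : (Setoid.quotientKerEquivRange fs).symm ⟨fs a, a, rfl⟩ = ⟦a⟧ :=
      (Equiv.symm_apply_eq _).mpr (Subtype.ext rfl)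
    simp only [e, Equiv.trans_apply, hq]
    rfl
  refine ⟨Perm.ofSubtype e.extendSubtype, fun a => ?_,
    fun y hy => Perm.ofSubtype_apply_of_not_mem _ hy⟩
  rw [Perm.ofSubtype_apply_of_mem _ (hf a), Equiv.extendSubtype_apply_of_mem _ _ ⟨a, rfl⟩]
  exact congrArg (fun y : Set.range fs' => (y : β)) (he a)

section Embedding

variable {I X : Type*}

@[simp] lemma embNat_apply_inl (τ : Perm ℕ) (x : X) :
    embNat I X τ (.inl x) = .inl x := rfl

@[simp] lemma embNat_apply_inr (τ : Perm ℕ) (i : I) (m : ℕ) :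
    embNat I X τ (.inr (i, m)) = .inr (i, τ m) := rfl

lemma embNat_mul (a b : Perm ℕ) : embNat I X (a * b) = embNat I X a * embNat I X b := by
  ext (x | ⟨i, m⟩) <;> rfl

lemma embNat_inv (a : Perm ℕ) : embNat I X a⁻¹ = (embNat I X a)⁻¹ := by
  ext (x | ⟨i, m⟩) <;> rfl

lemma commute_embNat {n : ℕ} {u : Perm ℕ} (hu : ∀ m < n, u m = m) {g : Perm (X ⊕ I × ℕ)}
    (hg : ∀ (i : I) (m : ℕ), n ≤ m → g (.inr (i, m)) = .inr (i, m)) :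
    Commute (embNat I X u) g := by
  refine Perm.Disjoint.commute fun v => ?_
  rcases v with x | ⟨i, m⟩
  · exact .inl rfl
  · rcases lt_or_ge m n with hm | hm
    · exact .inl (by simp [hu m hm])
    · exact .inr (hg i m hm)

lemma embNat_conj_conj_eq {n : ℕ} {κ σ σ' : Perm ℕ} (hκ : ∀ m < n, κ (σ m) = σ' m)
    {g : Perm (X ⊕ I × ℕ)}
    (hg : ∀ (i : I) (m : ℕ), n ≤ m → g (.inr (i, m)) = .inr (i, m)) :
    embNat I X κ * (embNat I X σ * g * (embNat I X σ)⁻¹) * (embNat I X κ)⁻¹ =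
      embNat I X σ' * g * (embNat I X σ')⁻¹ := by
  apply conj_conj_eq_of_commute
  rw [← embNat_inv, ← embNat_mul, ← embNat_mul]
  exact commute_embNat (fun m hm => by simp [hκ m hm]) hg

end Embedding

lemma fixesFrom.finite {N : ℕ} {τ : Perm ℕ} (hτ : fixesFrom N τ) : {m | τ m ≠ m}.Finite :=
  (Set.finite_Iio N).subset fun m hm => lt_of_not_ge fun hNm => hm (hτ m hNm)

lemma fixesFrom.le_of_forall_lt {N n : ℕ} {τ : Perm ℕ} (hτ : fixesFrom N τ)
    (hlt : ∀ j : Fin n, τ j < N) : n ≤ N := by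
  by_contra! hNn
  simpa [hτ N le_rfl] using hlt ⟨N, hNn⟩

section Gset

variable {I X : Type*} {Ginf : Subgroup (Perm (X ⊕ I × ℕ))}

lemma Gset_mul {N : ℕ} {a b : Perm (X ⊕ I × ℕ)} (ha : a ∈ Gset Ginf N)
    (hb : b ∈ Gset Ginf N) : a * b ∈ Gset Ginf N :=
  ⟨mul_mem ha.1 hb.1, fun i m hm => by rw [Perm.mul_apply, hb.2 i m hm, ha.2 i m hm]⟩

lemma embNat_conj_mem_Gset
    (hGS : ∀ τ : Perm ℕ, {m : ℕ | τ m ≠ m}.Finite → embNat I X τ ∈ Ginf)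
    {n N : ℕ} (hnN : n ≤ N) {g : Perm (X ⊕ I × ℕ)} (hg : g ∈ Gset Ginf n)
    {τ : Perm ℕ} (hτ : fixesFrom N τ) :
    embNat I X τ * g * (embNat I X τ)⁻¹ ∈ Gset Ginf N := by
  have hτG := hGS τ hτ.finite
  refine ⟨mul_mem (mul_mem hτG hg.1) (inv_mem hτG), fun i m hm => ?_⟩
  have hinv : (embNat I X τ)⁻¹ (.inr (i, m)) = .inr (i, m) :=
    Perm.inv_eq_iff_eq.mpr (by simp [hτ m hm])
  rw [Perm.mul_apply, Perm.mul_apply, hinv, hg.2 i m (hnN.trans hm), embNat_apply_inr,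
    hτ m hm]

end Gset

def realizationMap (n k : ℕ) (σs σt : Perm ℕ) : Fin n ⊕ Fin k → ℕ :=
  Sum.elim (fun j => σs j) (fun i => σt i)

section Realization

variable {n k : ℕ} {L : PB k n} {σs σt σs' σt' : Perm ℕ}

lemma IsRealization.realizationMap_lt (h : IsRealization n k L σs σt) :
    ∀ a, realizationMap n k σs σt a < n + k - L.rank
  | .inl j => h.2.2.1 j
  | .inr i => h.2.2.2.1 i

lemma IsRealization.realizationMap_eq_iff (h : IsRealization n k L σs σt)
    (h' : IsRealization n k L σs' σt') (a b : Fin n ⊕ Fin k) :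
    realizationMap n k σs σt a = realizationMap n k σs σt b ↔
      realizationMap n k σs' σt' a = realizationMap n k σs' σt' b := by
  rcases a with j | i <;> rcases b with j' | i' <;>
    simp only [realizationMap, Sum.elim_inl, Sum.elim_inr, EmbeddingLike.apply_eq_iff_eq]
  · rw [eq_comm, h.2.2.2.2, ← h'.2.2.2.2]
    exact eq_comm
  · rw [h.2.2.2.2, h'.2.2.2.2]

end Realization

theorem circledAst_welldefined_general
    {I X : Type*}
    (Ginf : Subgroup (Equiv.Perm (X ⊕ I × ℕ)))
    (hGS : ∀ τ : Equiv.Perm ℕ, {m : ℕ | τ m ≠ m}.Finite → embNat I X τ ∈ Ginf)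
    (n k : ℕ) (g h : Equiv.Perm (X ⊕ I × ℕ))
    (hg : g ∈ Gset Ginf n) (hh : h ∈ Gset Ginf k)
    (L : PB k n) (σs σt σs' σt' : Equiv.Perm ℕ)
    (h1 : IsRealization n k L σs σt) (h2 : IsRealization n k L σs' σt') :
    (embNat I X σs * g * (embNat I X σs)⁻¹) * (embNat I X σt * h * (embNat I X σt)⁻¹)
        ∈ Gset Ginf (n + k - L.rank) ∧
    (embNat I X σs' * g * (embNat I X σs')⁻¹) * (embNat I X σt' * h * (embNat I X σt')⁻¹)
        ∈ Gset Ginf (n + k - L.rank) ∧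
    Kconj (n + k - L.rank)
      ((embNat I X σs * g * (embNat I X σs)⁻¹) * (embNat I X σt * h * (embNat I X σt)⁻¹))
      ((embNat I X σs' * g * (embNat I X σs')⁻¹) *
        (embNat I X σt' * h * (embNat I X σt')⁻¹)) := by
  have hnN : n ≤ n + k - L.rank := h1.1.le_of_forall_lt h1.2.2.1
  have hkN : k ≤ n + k - L.rank := h1.2.1.le_of_forall_lt h1.2.2.2.1
  refine ⟨Gset_mul (embNat_conj_mem_Gset hGS hnN hg h1.1)
      (embNat_conj_mem_Gset hGS hkN hh h1.2.1),
    Gset_mul (embNat_conj_mem_Gset hGS hnN hg h2.1)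
      (embNat_conj_mem_Gset hGS hkN hh h2.2.1), ?_⟩
  obtain ⟨κ, hκ, hκ_fix⟩ := exists_perm_apply_eq_of_ker_eq (h1.realizationMap_eq_iff h2)
    (Set.finite_Iio _) h1.realizationMap_lt h2.realizationMap_lt
  refine ⟨κ, fun m hm => hκ_fix m hm.not_gt, ?_⟩
  rw [← conj_mul, embNat_conj_conj_eq (fun m hm => hκ (.inl ⟨m, hm⟩)) hg.2,
    embNat_conj_conj_eq (fun m hm => hκ (.inr ⟨m, hm⟩)) hh.2]

/-- For `g ∈ G_n`, `h ∈ G_k` and a partial bijection `λ` from `{0,…,k−1}` to `{0,…,n−1}`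
of rank `d`, and any two realizations `(s,t)`, `(s′,t′)` of `λ`, the elements
`(s g s⁻¹)(t h t⁻¹)` and `(s′ g s′⁻¹)(t′ h t′⁻¹)` both lie in `G_{n+k−d}` and are
`K_{n+k−d}`-conjugate:  the `K_{n+k−d}`-conjugacy class of `g ⊛_λ h` does not depend on
the choice of realization. -/
theorem circledAst_welldefined
    {I X : Type*} [Finite I] [Countable X]
    (Ginf : Subgroup (Equiv.Perm (X ⊕ I × ℕ)))
    (hGfs : ∀ g ∈ Ginf, {v : X ⊕ I × ℕ | g v ≠ v}.Finite)
    (hGS : ∀ τ : Equiv.Perm ℕ, {m : ℕ | τ m ≠ m}.Finite → embNat I X τ ∈ Ginf)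
    (n k : ℕ) (g h : Equiv.Perm (X ⊕ I × ℕ))
    (hg : g ∈ Gset Ginf n) (hh : h ∈ Gset Ginf k)
    (L : PB k n) (σs σt σs' σt' : Equiv.Perm ℕ)
    (h1 : IsRealization n k L σs σt) (h2 : IsRealization n k L σs' σt') :
    (embNat I X σs * g * (embNat I X σs)⁻¹) * (embNat I X σt * h * (embNat I X σt)⁻¹)
        ∈ Gset Ginf (n + k - L.rank) ∧
    (embNat I X σs' * g * (embNat I X σs')⁻¹) * (embNat I X σt' * h * (embNat I X σt')⁻¹)
        ∈ Gset Ginf (n + k - L.rank) ∧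
    Kconj (n + k - L.rank)
      ((embNat I X σs * g * (embNat I X σs)⁻¹) * (embNat I X σt * h * (embNat I X σt)⁻¹))
      ((embNat I X σs' * g * (embNat I X σs')⁻¹) *
        (embNat I X σt' * h * (embNat I X σt')⁻¹)) :=
  circledAst_welldefined_general Ginf hGS n k g h hg hh L σs σt σs' σt' h1 h2

end
end

section
/- Let g ∈ G_n and h ∈ G_k. Then for every N ∈ ℕ, the product A_N[n,g] * A_N[k,h] lies in the complex linear span of the elements A_N[m,r] with m ≤ n + k and r ∈ G_m. -/
noncomputable section

/-!
Up to the factor `1/(N-j)!`, `A_N[j,g]` is the sum of the `K_N`-conjugates of `g`, so the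
product of two such sums is `Σ_ρ Σ_σ σ (g ρ h ρ⁻¹) σ⁻¹` with `σ, ρ` ranging over `K_N`.
Each `q = g ρ h ρ⁻¹` moves only indices in `S = {0,…,n-1} ∪ ρ{0,…,k-1} ⊆ {0,…,N-1}`, a set
of size `m ≤ n + k`. Conjugating `q` by an element of `K_N` that sends `S` into `{0,…,m-1}`
gives some `r ∈ G_m` with the same conjugation sum, and that sum is `(N-m)! · A_N[m,r]`.
-/

open Equiv

section ConjSum

variable (R : Type*) {K G : Type*} [CommSemiring R] [Group K] [Fintype K] [Group G]

def conjSum (φ : K →* G) (q : G) : MonoidAlgebra R G :=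
  ∑ κ, MonoidAlgebra.of R G (φ κ * q * (φ κ)⁻¹)

variable {R}

lemma conjSum_conj (φ : K →* G) (τ : K) (q : G) :
    conjSum R φ (φ τ * q * (φ τ)⁻¹) = conjSum R φ q :=
  Fintype.sum_equiv (Equiv.mulRight τ) _ _ fun κ => by
    simp only [coe_mulRight, map_mul, mul_inv_rev, mul_assoc]

lemma conjSum_mul_conjSum (φ : K →* G) (g h : G) :
    conjSum R φ g * conjSum R φ h = ∑ ρ, conjSum R φ (g * φ ρ * h * (φ ρ)⁻¹) :=
  calc _ = ∑ σ, ∑ ρ, MonoidAlgebra.of R G (φ σ * (g * φ ρ * h * (φ ρ)⁻¹) * (φ σ)⁻¹) := by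
        rw [conjSum, conjSum, Finset.sum_mul_sum]
        refine Finset.sum_congr rfl fun σ _ =>
          Fintype.sum_equiv (Equiv.mulLeft σ⁻¹) _ _ fun σ' => ?_
        rw [← map_mul]
        congr 1
        simp only [coe_mulLeft, map_mul, map_inv]
        group
    _ = _ := Finset.sum_comm

end ConjSum

section Embeddings

variable (I X : Type*)

def embNatHom : Perm ℕ →* Perm (X ⊕ I × ℕ) where
  toFun := embNat I X
  map_one' := by ext (x | ⟨i, m⟩) <;> rfl
  map_mul' τ τ' := by ext (x | ⟨i, m⟩) <;> rfl

def embFinHom (N : ℕ) : Perm (Fin N) →* Perm (X ⊕ I × ℕ) :=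
  (embNatHom I X).comp (Perm.extendDomainHom Fin.equivSubtype)

lemma AN_of_le {N j : ℕ} (hj : j ≤ N) (g : Perm (X ⊕ I × ℕ)) :
    AN I X N j g = ((N - j).factorial : ℂ)⁻¹ • conjSum ℂ (embFinHom I X N) g :=
  if_pos hj

lemma AN_of_lt {N j : ℕ} (hj : N < j) (g : Perm (X ⊕ I × ℕ)) : AN I X N j g = 0 :=
  if_neg hj.not_ge

end Embeddings

lemma extendDomain_finEquivSubtype_apply_val {N : ℕ} (σ : Perm (Fin N)) (j : Fin N) :
    σ.extendDomain Fin.equivSubtype j = σ j := by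
  simpa [Fin.equivSubtype] using Perm.extendDomain_apply_image σ Fin.equivSubtype j

lemma extendDomain_finEquivSubtype_apply_of_le {N j : ℕ} (σ : Perm (Fin N)) (hj : N ≤ j) :
    σ.extendDomain Fin.equivSubtype j = j :=
  Perm.extendDomain_apply_not_subtype σ Fin.equivSubtype hj.not_gt

lemma exists_perm_fin_image_subset_Iio_card {N : ℕ} (S : Finset ℕ) (hS : S ⊆ Finset.range N) :
    ∃ σ : Perm (Fin N), σ.extendDomain Fin.equivSubtype '' S ⊆ Set.Iio S.card := by
  classical
  let B : Finset (Fin N) := Finset.univ.filter fun j => (j : ℕ) ∈ S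
  have hB : B.map Fin.valEmbedding = S := by
    ext m
    simp only [B, Finset.mem_map, Finset.mem_filter, Finset.mem_univ, true_and,
      Fin.valEmbedding_apply]
    exact ⟨fun ⟨j, hj, hjm⟩ => hjm ▸ hj, fun hm => ⟨⟨m, Finset.mem_range.1 (hS hm)⟩, hm, rfl⟩⟩
  have hSN : S.card ≤ N := by simpa using Finset.card_le_card hS
  let T : Finset (Fin N) := Finset.univ.map (Fin.castLEEmb hSN)
  let e : {j // j ∈ B} ≃ {j // j ∈ T} :=
    Finset.equivOfCardEq <| by
      rw [Finset.card_map, Finset.card_univ, Fintype.card_fin, ← hB, Finset.card_map]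
  refine ⟨e.extendSubtype, ?_⟩
  rintro _ ⟨m, hm, rfl⟩
  have hmN : m < N := Finset.mem_range.1 (hS hm)
  have hmB : (⟨m, hmN⟩ : Fin N) ∈ B := by simpa [B] using hm
  obtain ⟨j, -, hj⟩ := Finset.mem_map.1 (e.extendSubtype_mem _ hmB)
  rw [show m = ((⟨m, hmN⟩ : Fin N) : ℕ) from rfl, extendDomain_finEquivSubtype_apply_val, ← hj]
  exact j.2

section FixesOutside

variable {I X : Type*}

def FixesOutside (q : Perm (X ⊕ I × ℕ)) (S : Set ℕ) : Prop :=
  ∀ (i : I) (m : ℕ), m ∉ S → q (Sum.inr (i, m)) = Sum.inr (i, m)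

lemma mem_Gset_iff {Ginf : Subgroup (Perm (X ⊕ I × ℕ))} {n : ℕ} {g : Perm (X ⊕ I × ℕ)} :
    g ∈ Gset Ginf n ↔ g ∈ Ginf ∧ FixesOutside g (Set.Iio n) := by
  simp [Gset, FixesOutside]

namespace FixesOutside

variable {g h q : Perm (X ⊕ I × ℕ)} {S T : Set ℕ}

lemma mono (hq : FixesOutside q S) (hST : S ⊆ T) : FixesOutside q T :=
  fun i m hm => hq i m fun h => hm (hST h)

lemma mul (hg : FixesOutside g S) (hh : FixesOutside h T) : FixesOutside (g * h) (S ∪ T) := by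
  intro i m hm
  rw [Set.mem_union, not_or] at hm
  rw [Perm.mul_apply, hh i m hm.2, hg i m hm.1]

lemma conj (hq : FixesOutside q S) (τ : Perm ℕ) :
    FixesOutside (embNat I X τ * q * (embNat I X τ)⁻¹) (τ '' S) := by
  intro i m hm
  have hτm : τ⁻¹ m ∉ S := fun h => hm ⟨_, h, by simp⟩
  change embNat I X τ (q (Sum.inr (i, τ⁻¹ m))) = _
  rw [hq i _ hτm]
  simp [embNat]

end FixesOutside

end FixesOutside

section Products

variable {I X : Type*} {Ginf : Subgroup (Perm (X ⊕ I × ℕ))}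
  (hGS : ∀ τ : Perm ℕ, {m : ℕ | τ m ≠ m}.Finite → embNat I X τ ∈ Ginf)
include hGS

lemma embFinHom_mem {N : ℕ} (σ : Perm (Fin N)) : embFinHom I X N σ ∈ Ginf :=
  hGS _ <| (Set.finite_Iio N).subset fun _ hm =>
    not_le.1 fun h => hm (extendDomain_finEquivSubtype_apply_of_le σ h)

lemma exists_conjSum_eq_smul_AN {N : ℕ} {q : Perm (X ⊕ I × ℕ)} (hq : q ∈ Ginf) (S : Finset ℕ)
    (hqS : FixesOutside q S) (hSN : S ⊆ Finset.range N) :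
    ∃ r ∈ Gset Ginf S.card,
      conjSum ℂ (embFinHom I X N) q = ((N - S.card).factorial : ℂ) • AN I X N S.card r := by
  obtain ⟨σ, hσ⟩ := exists_perm_fin_image_subset_Iio_card S hSN
  have hσG := embFinHom_mem hGS σ
  refine ⟨_, mem_Gset_iff.2 ⟨mul_mem (mul_mem hσG hq) (inv_mem hσG), (hqS.conj _).mono hσ⟩, ?_⟩
  have hcard : S.card ≤ N := by simpa using Finset.card_le_card hSN
  rw [AN_of_le _ _ hcard, smul_smul, mul_inv_cancel₀ (Nat.cast_ne_zero.2 (Nat.factorial_ne_zero _)),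
    one_smul, conjSum_conj]

lemma exists_conjSum_mul_conj_eq_smul_AN {n k N : ℕ} (hn : n ≤ N) (hk : k ≤ N)
    {g h : Perm (X ⊕ I × ℕ)} (hg : g ∈ Gset Ginf n) (hh : h ∈ Gset Ginf k) (ρ : Perm (Fin N)) :
    ∃ m ≤ n + k, ∃ r ∈ Gset Ginf m,
      conjSum ℂ (embFinHom I X N) (g * embFinHom I X N ρ * h * (embFinHom I X N ρ)⁻¹)
        = ((N - m).factorial : ℂ) • AN I X N m r := by
  obtain ⟨hgG, hgS⟩ := mem_Gset_iff.1 hg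
  obtain ⟨hhG, hhS⟩ := mem_Gset_iff.1 hh
  have hρG := embFinHom_mem hGS ρ
  let ρ' := ρ.extendDomain Fin.equivSubtype
  let S := Finset.range n ∪ (Finset.range k).image ρ'
  have hqS : FixesOutside (g * embFinHom I X N ρ * h * (embFinHom I X N ρ)⁻¹) S := by
    rw [Finset.coe_union, Finset.coe_range, Finset.coe_image, Finset.coe_range,
      show ∀ a : Perm (X ⊕ I × ℕ), g * a * h * a⁻¹ = g * (a * h * a⁻¹) from fun a => by group]
    exact hgS.mul (hhS.conj ρ')
  have hSN : S ⊆ Finset.range N := by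
    refine Finset.union_subset (Finset.range_subset_range.2 hn)
      (Finset.image_subset_iff.2 fun j hj => ?_)
    have hjN : j < N := (Finset.mem_range.1 hj).trans_le hk
    rw [Finset.mem_range, show j = ((⟨j, hjN⟩ : Fin N) : ℕ) from rfl,
      extendDomain_finEquivSubtype_apply_val]
    exact Fin.is_lt _
  have hSnk : S.card ≤ n + k :=
    (Finset.card_union_le _ _).trans <| by
      simpa using add_le_add_left (Finset.card_image_le (s := Finset.range k) (f := ρ')) n
  obtain ⟨r, hr, hq⟩ := exists_conjSum_eq_smul_AN hGS
    (mul_mem (mul_mem (mul_mem hgG hρG) hhG) (inv_mem hρG)) S hqS hSN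
  exact ⟨S.card, hSnk, r, hr, hq⟩

end Products

theorem AN_mul_AN_mem_span_general
    {I X : Type*}
    (Ginf : Subgroup (Equiv.Perm (X ⊕ I × ℕ)))
    (hGS : ∀ τ : Equiv.Perm ℕ, {m : ℕ | τ m ≠ m}.Finite → embNat I X τ ∈ Ginf)
    (n k : ℕ) (g h : Equiv.Perm (X ⊕ I × ℕ))
    (hg : g ∈ Gset Ginf n) (hh : h ∈ Gset Ginf k) (N : ℕ) :
    AN I X N n g * AN I X N k h
      ∈ Submodule.span ℂ
          {x : MonoidAlgebra ℂ (Equiv.Perm (X ⊕ I × ℕ)) |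
            ∃ m : ℕ, m ≤ n + k ∧ ∃ r ∈ Gset Ginf m, x = AN I X N m r} := by
  rcases lt_or_ge N n with hn | hn
  · simp [AN_of_lt I X hn]
  rcases lt_or_ge N k with hk | hk
  · simp [AN_of_lt I X hk]
  rw [AN_of_le I X hn, AN_of_le I X hk, smul_mul_smul_comm, conjSum_mul_conjSum]
  refine Submodule.smul_mem _ _ (Submodule.sum_mem _ fun ρ _ => ?_)
  obtain ⟨m, hm, r, hr, hq⟩ := exists_conjSum_mul_conj_eq_smul_AN hGS hn hk hg hh ρ
  rw [hq]
  exact Submodule.smul_mem _ _ (Submodule.subset_span ⟨m, hm, r, hr, rfl⟩)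

/-- For `g ∈ G_n`, `h ∈ G_k` and every `N`, the product `A_N[n,g] * A_N[k,h]` lies in the
complex linear span of the elements `A_N[m,r]` with `m ≤ n + k` and `r ∈ G_m`. -/
theorem AN_mul_AN_mem_span
    {I X : Type*} [Finite I] [Countable X]
    (Ginf : Subgroup (Equiv.Perm (X ⊕ I × ℕ)))
    (hGfs : ∀ g ∈ Ginf, {v : X ⊕ I × ℕ | g v ≠ v}.Finite)
    (hGS : ∀ τ : Equiv.Perm ℕ, {m : ℕ | τ m ≠ m}.Finite → embNat I X τ ∈ Ginf)
    (n k : ℕ) (g h : Equiv.Perm (X ⊕ I × ℕ))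
    (hg : g ∈ Gset Ginf n) (hh : h ∈ Gset Ginf k) (N : ℕ) :
    AN I X N n g * AN I X N k h
      ∈ Submodule.span ℂ
          {x : MonoidAlgebra ℂ (Equiv.Perm (X ⊕ I × ℕ)) |
            ∃ m : ℕ, m ≤ n + k ∧ ∃ r ∈ Gset Ginf m, x = AN I X N m r} :=
  AN_mul_AN_mem_span_general Ginf hGS n k g h hg hh N

end
end

section
/- Suppose X = ∅. Let g ∈ G_n and h ∈ G_k. Then for every N ∈ ℕ, the element (A_N[n,g] * A_N[k,h] − A_N[k,h] * A_N[n,g]) − Σ_λ ( A_N[n+k−1, g ⊛_λ h] − A_N[n+k−1, h ⊛_{λ⁻¹} g] ) lies in the complex linear span of the elements A_N[m,r] with m ≤ n + k − 2 and r ∈ G_m, where the sum runs over all partial bijections λ from {0,…,k−1} to {0,…,n−1} of rank 1 (equivalently, over all pairs (α,β) with α ∈ {0,…,k−1}, β ∈ {0,…,n−1}), λ⁻¹ denotes the inverse partial bijection from {0,…,n−1} to {0,…,k−1}, and g ⊛_λ h, h ⊛_{λ⁻¹} g ∈ G_{n+k−1} are computed from arbitrary realizations. -/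
noncomputable section

/-!
Expanding both products over `K_N × K_N` gives
`A_N[n,g] A_N[k,h] = c Σ_ρ Σ_σ σ (g · ρhρ⁻¹) σ⁻¹` with `c = ((N-n)! (N-k)!)⁻¹`, and the same
with `ρhρ⁻¹ · g` for the reverse product (`ρ, σ ∈ K_N`). Sort the `ρ` by the partial bijection
`λ_ρ = {(i,j) | ρ i = j}` from `{0,…,k-1}` to `{0,…,n-1}`:
* if `λ_ρ = ∅`, then `g` and `ρhρ⁻¹` have disjoint supports, commute, and the two terms cancel;
* if `λ_ρ = {(α,β)}`, then `(1, ρ)` realizes the same partial bijection as the given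
  realizations, so both terms are `K_N`-conjugate to the chosen `⊛`-products; there are
  `(N-n)(N-n-1)⋯(N-n-k+2) · (N-k)!` such `ρ`, which turns `c` into `1/(N-n-k+1)!`;
* if `λ_ρ` has rank at least two, both products are supported on `n + k - rk λ_ρ ≤ n + k - 2`
  points, and conjugating this support onto an initial segment exhibits their orbit sums as
  multiples of some `A_N[m,r]` with `r ∈ G_m`, `m ≤ n + k - 2`.
-/

open Equiv Finset Function
open scoped Nat

namespace CommutatorAN

theorem exists_perm_extending_of_coincide {α ι κ : Type*} [Finite ι] [Finite κ]
    {σ₁ σ₂ : ι → α} {τ₁ τ₂ : κ → α} (hσ₁ : Injective σ₁) (hσ₂ : Injective σ₂)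
    (hτ₁ : Injective τ₁) (hτ₂ : Injective τ₂) (h : ∀ i j, τ₁ i = σ₁ j ↔ τ₂ i = σ₂ j) :
    ∃ π : Perm α, (∀ j, π (σ₁ j) = σ₂ j) ∧ ∀ i, π (τ₁ i) = τ₂ i := by
  have hinj : ∀ {σ : ι → α} {τ : κ → α}, Injective σ → Injective τ →
      (∀ (i : {i // ∀ j, τ₁ i ≠ σ₁ j}) j, τ i ≠ σ j) →
      Injective (Sum.elim σ fun i : {i // ∀ j, τ₁ i ≠ σ₁ j} => τ i) := by
    intro σ τ hσ hτ hne
    rintro (a | a) (b | b) hab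
    · exact congrArg _ (hσ hab)
    · exact absurd hab.symm (hne b a)
    · exact absurd hab (hne a b)
    · exact congrArg _ (Subtype.ext (hτ hab))
  obtain ⟨π, hπ⟩ := Perm.exists_extending_pair _ _ (hinj hσ₁ hτ₁ fun i j => i.2 j)
    (hinj hσ₂ hτ₂ fun i j => mt (h i j).2 (i.2 j))
  refine ⟨π, fun j => hπ (.inl j), fun i => ?_⟩
  by_cases hi : ∃ j, τ₁ i = σ₁ j
  · obtain ⟨j, hj⟩ := hi
    rw [hj, (h i j).1 hj]
    exact hπ (.inl j)
  · exact hπ (.inr ⟨i, fun j hj => hi ⟨j, hj⟩⟩)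

theorem card_perm_extending {α ι : Type*} [Fintype α] [DecidableEq α] [Fintype ι]
    {f g : ι → α} (hf : Injective f) (hg : Injective g) :
    #{σ : Perm α | ∀ i, σ (f i) = g i} = (Fintype.card α - Fintype.card ι)! := by
  obtain ⟨σ₀, hσ₀⟩ := Perm.exists_extending_pair f g hf hg
  have hfix : #{σ : Perm α | ∀ i, σ (f i) = f i} = (Fintype.card α - Fintype.card ι)! := by
    classical
    rw [← Fintype.card_subtype, ← Fintype.card_congr
      ((Perm.subtypeEquivSubtypePerm (· ∉ Set.range f)).trans (Equiv.subtypeEquivRight _)),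
      Fintype.card_perm, Fintype.card_subtype_compl, Set.card_range_of_injective hf]
    simp [Set.mem_range]
  rw [← hfix]
  refine card_nbij' (σ₀⁻¹ * ·) (σ₀ * ·) ?_ ?_ (fun σ _ => by simp) (fun σ _ => by simp)
  · intro σ hσ
    simp_all [Equiv.symm_apply_eq]
  · intro σ hσ
    simp_all

theorem card_perm_filter_comp {α ι : Type*} [Fintype α] [DecidableEq α] [Fintype ι]
    [DecidableEq ι] {f₀ : ι → α} (hf₀ : Injective f₀) (P : (ι → α) → Prop) [DecidablePred P] :
    #{σ : Perm α | P (σ ∘ f₀)} =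
      #{f : ι → α | Injective f ∧ P f} * (Fintype.card α - Fintype.card ι)! := by
  classical
  rw [card_eq_sum_card_fiberwise (f := fun σ : Perm α => σ ∘ f₀)
    (t := {f : ι → α | Injective f ∧ P f}) fun σ hσ => by
      simp_all [σ.injective.comp hf₀]]
  refine sum_const_nat fun f hf => ?_
  rw [mem_filter] at hf
  rw [← card_perm_extending hf₀ hf.2.1, filter_filter]
  congr 1
  ext σ
  simp only [mem_filter, mem_univ, true_and, funext_iff, comp_apply]
  exact ⟨And.right, fun h => ⟨(funext h : σ ∘ f₀ = f) ▸ hf.2.2, h⟩⟩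

theorem card_injective_apply_eq_and_mem {α ι : Type*} [Fintype α] [DecidableEq α] [Fintype ι]
    [DecidableEq ι] (a₀ : ι) (b₀ : α) (B : Finset α) (hb₀ : b₀ ∉ B) :
    #{f : ι → α | Injective f ∧ f a₀ = b₀ ∧ ∀ i ≠ a₀, f i ∈ B} =
      (#B).descFactorial (Fintype.card ι - 1) := by
  have hcard : Fintype.card ι - 1 = Fintype.card {i // i ≠ a₀} := by
    simp [Fintype.card_subtype_compl]
  rw [← Fintype.card_subtype, ← Fintype.card_coe B, hcard, ← Fintype.card_embedding_eq]
  refine Fintype.card_congr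
    { toFun := fun f => ⟨fun i => ⟨f.1 i.1, f.2.2.2 i.1 i.2⟩,
        fun i j hij => Subtype.ext (f.2.1 (congrArg Subtype.val hij))⟩
      invFun := fun e => ⟨fun i => if h : i = a₀ then b₀ else e ⟨i, h⟩, ?_, by simp,
        fun i hi => by simp [hi]⟩
      left_inv := fun f => by
        ext i
        by_cases hi : i = a₀
        · simp [hi, f.2.2.1]
        · exact dif_neg hi
      right_inv := fun e => by
        ext i
        simp [i.2] }
  intro i j hij
  by_cases hi : i = a₀ <;> by_cases hj : j = a₀
  · rw [hi, hj]
  · simp only [hi, hj, dite_true, dite_false] at hij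
    exact absurd (hij ▸ (e ⟨j, hj⟩).2) hb₀
  · simp only [hi, hj, dite_true, dite_false] at hij
    exact absurd (hij ▸ (e ⟨i, hi⟩).2) hb₀
  · simp only [hi, hj, dite_false] at hij
    exact congrArg Subtype.val (e.injective (Subtype.ext hij))

theorem sum_eq_sum_sum_eq_singleton_add_sum_two_le {α β M : Type*} [Fintype α]
    [Fintype β] [DecidableEq β] [AddCommMonoid M] (s : α → Finset β) (F : α → M)
    (hF : ∀ a, s a = ∅ → F a = 0) :
    ∑ a, F a = ∑ b, ∑ a with s a = {b}, F a + ∑ a with 2 ≤ #(s a), F a := by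
  simp only [sum_filter]
  rw [sum_comm, ← sum_add_distrib]
  refine sum_congr rfl fun a _ => ?_
  obtain h | h | h : #(s a) = 0 ∨ #(s a) = 1 ∨ 2 ≤ #(s a) := by omega
  · simp [card_eq_zero.1 h, hF a]
  · obtain ⟨b, hb⟩ := card_eq_one.1 h
    simp [hb]
  · have hne : ∀ b, s a ≠ {b} := fun b hb => by simp [hb] at h
    simp [hne, h]

variable {I X : Type*}

@[simp] lemma embNat_apply_inr (τ : Perm ℕ) (i : I) (m : ℕ) :
    embNat I X τ (.inr (i, m)) = .inr (i, τ m) := rfl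

@[simp] lemma embNat_mul (σ τ : Perm ℕ) :
    embNat I X (σ * τ) = embNat I X σ * embNat I X τ := by
  ext (x | ⟨i, m⟩) <;> rfl

@[simp] lemma embNat_one : embNat I X 1 = 1 := by
  ext (x | ⟨i, m⟩) <;> rfl

lemma embNat_inv (τ : Perm ℕ) : embNat I X τ⁻¹ = (embNat I X τ)⁻¹ :=
  eq_inv_of_mul_eq_one_left (by rw [← embNat_mul, inv_mul_cancel, embNat_one])

lemma embNat_mem {Ginf : Subgroup (Perm (X ⊕ I × ℕ))}
    (hGS : ∀ τ : Perm ℕ, {m : ℕ | τ m ≠ m}.Finite → embNat I X τ ∈ Ginf)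
    {N : ℕ} {τ : Perm ℕ} (hτ : fixesFrom N τ) : embNat I X τ ∈ Ginf :=
  hGS τ ((Set.finite_lt_nat N).subset fun m hm => not_le.1 (mt (hτ m) hm))

def natPerm {N : ℕ} (ρ : Perm (Fin N)) : Perm ℕ := ρ.extendDomain Fin.equivSubtype

lemma natPerm_apply_of_lt {N : ℕ} (ρ : Perm (Fin N)) {m : ℕ} (hm : m < N) :
    natPerm ρ m = ρ ⟨m, hm⟩ := by
  rw [natPerm, Perm.extendDomain_apply_subtype _ Fin.equivSubtype hm]
  rfl

lemma natPerm_apply_of_le {N : ℕ} (ρ : Perm (Fin N)) {m : ℕ} (hm : N ≤ m) :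
    natPerm ρ m = m :=
  Perm.extendDomain_apply_not_subtype _ Fin.equivSubtype (not_lt.2 hm)

lemma natPerm_fixesFrom {N : ℕ} (ρ : Perm (Fin N)) : fixesFrom N (natPerm ρ) :=
  fun _ => natPerm_apply_of_le ρ

lemma natPerm_lt {N : ℕ} (ρ : Perm (Fin N)) {m : ℕ} (hm : m < N) : natPerm ρ m < N := by
  rw [natPerm_apply_of_lt ρ hm]
  exact (ρ _).2

lemma natPerm_mul {N : ℕ} (σ τ : Perm (Fin N)) : natPerm (σ * τ) = natPerm σ * natPerm τ :=
  (Perm.extendDomain_mul _ _ _).symm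

lemma natPerm_inv {N : ℕ} (σ : Perm (Fin N)) : natPerm σ⁻¹ = (natPerm σ)⁻¹ :=
  (Perm.extendDomain_inv _ _).symm

lemma embFin_eq_embNat_natPerm (N : ℕ) (ρ : Perm (Fin N)) :
    embFin I X N ρ = embNat I X (natPerm ρ) := rfl

lemma embFin_mul {N : ℕ} (σ τ : Perm (Fin N)) :
    embFin I X N (σ * τ) = embFin I X N σ * embFin I X N τ := by
  rw [embFin_eq_embNat_natPerm, natPerm_mul, embNat_mul]
  rfl

lemma embFin_inv {N : ℕ} (σ : Perm (Fin N)) : embFin I X N σ⁻¹ = (embFin I X N σ)⁻¹ := by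
  rw [embFin_eq_embNat_natPerm, natPerm_inv, embNat_inv]
  rfl

def IsSupportedIn (A : Set ℕ) (u : Perm (X ⊕ I × ℕ)) : Prop :=
  ∀ (i : I) (m : ℕ), m ∉ A → u (.inr (i, m)) = .inr (i, m)

lemma isSupportedIn_embNat (τ : Perm ℕ) : IsSupportedIn {m | τ m ≠ m} (embNat I X τ) :=
  fun i m hm => by simp_all

namespace IsSupportedIn

variable {A B : Set ℕ} {u v : Perm (X ⊕ I × ℕ)}

lemma mono (hu : IsSupportedIn A u) (hAB : A ⊆ B) : IsSupportedIn B u :=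
  fun i m hm => hu i m (mt (@hAB m) hm)

lemma mul (hu : IsSupportedIn A u) (hv : IsSupportedIn B v) : IsSupportedIn (A ∪ B) (u * v) :=
  fun i m hm => by
    rw [Set.mem_union, not_or] at hm
    rw [Perm.mul_apply, hv i m hm.2, hu i m hm.1]

lemma conj (hu : IsSupportedIn A u) (τ : Perm ℕ) :
    IsSupportedIn (τ '' A) (embNat I X τ * u * (embNat I X τ)⁻¹) := fun i m hm => by
  have hm' : τ⁻¹ m ∉ A := fun h => hm ⟨_, h, by simp⟩
  rw [Perm.mul_apply, Perm.mul_apply, ← embNat_inv, embNat_apply_inr, hu i _ hm',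
    embNat_apply_inr]
  simp

lemma of_mem_Gset {Ginf : Subgroup (Perm (X ⊕ I × ℕ))} {n : ℕ} (hu : u ∈ Gset Ginf n) :
    IsSupportedIn {m | m < n} u :=
  fun i m hm => hu.2 i m (not_lt.1 hm)

lemma commute [IsEmpty X] (hu : IsSupportedIn A u) (hv : IsSupportedIn B v)
    (hAB : Disjoint A B) : Commute u v := by
  refine Perm.Disjoint.commute fun x => ?_
  rcases x with x | ⟨i, m⟩
  · exact isEmptyElim x
  by_cases hm : m ∈ A
  · exact .inr (hv i m (hAB.notMem_of_mem_left hm))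
  · exact .inl (hu i m hm)

lemma conj_eq_self [IsEmpty X] (hu : IsSupportedIn A u) {τ : Perm ℕ}
    (hτ : ∀ m ∈ A, τ m = m) : embNat I X τ * u * (embNat I X τ)⁻¹ = u := by
  rw [((isSupportedIn_embNat τ).commute hu
    (Set.disjoint_left.2 fun m hm hmA => hm (hτ m hmA))).eq, mul_inv_cancel_right]

lemma conj_eq_conj [IsEmpty X] (hu : IsSupportedIn A u) {τ₁ τ₂ : Perm ℕ}
    (hτ : Set.EqOn τ₁ τ₂ A) :
    embNat I X τ₁ * u * (embNat I X τ₁)⁻¹ = embNat I X τ₂ * u * (embNat I X τ₂)⁻¹ := by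
  have h := hu.conj_eq_self (τ := τ₂⁻¹ * τ₁) fun m hm => by simp [hτ hm]
  rw [embNat_mul, embNat_inv] at h
  calc _ = embNat I X τ₂ * ((embNat I X τ₂)⁻¹ * embNat I X τ₁ * u *
        ((embNat I X τ₂)⁻¹ * embNat I X τ₁)⁻¹) * (embNat I X τ₂)⁻¹ := by group
    _ = _ := by rw [h]

end IsSupportedIn

def conjSum (I X : Type*) (N : ℕ) (u : Perm (X ⊕ I × ℕ)) :
    MonoidAlgebra ℂ (Perm (X ⊕ I × ℕ)) :=
  ∑ σ : Perm (Fin N), MonoidAlgebra.of ℂ _ (embFin I X N σ * u * (embFin I X N σ)⁻¹)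

lemma AN_eq_smul_conjSum {N j : ℕ} (hj : j ≤ N) (u : Perm (X ⊕ I × ℕ)) :
    AN I X N j u = ((N - j)! : ℂ)⁻¹ • conjSum I X N u :=
  if_pos hj

lemma AN_eq_zero {N j : ℕ} (hj : N < j) (u : Perm (X ⊕ I × ℕ)) : AN I X N j u = 0 :=
  if_neg (not_le.2 hj)

lemma conjSum_eq_smul_AN {N j : ℕ} (hj : j ≤ N) (u : Perm (X ⊕ I × ℕ)) :
    conjSum I X N u = ((N - j)! : ℂ) • AN I X N j u := by
  rw [AN_eq_smul_conjSum hj, smul_inv_smul₀ (Nat.cast_ne_zero.2 (Nat.factorial_ne_zero _))]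

lemma conjSum_conj {N : ℕ} (π : Perm (Fin N)) (u : Perm (X ⊕ I × ℕ)) :
    conjSum I X N (embNat I X (natPerm π) * u * (embNat I X (natPerm π))⁻¹) =
      conjSum I X N u := by
  refine Fintype.sum_equiv (Equiv.mulRight π) _ _ fun σ => ?_
  simp only [Equiv.coe_mulRight, embFin_eq_embNat_natPerm, natPerm_mul, embNat_mul, mul_inv_rev,
    mul_assoc]

lemma conjSum_mul_conjSum_eq_sum_mul_conj (N : ℕ) (u v : Perm (X ⊕ I × ℕ)) :
    conjSum I X N u * conjSum I X N v =
      ∑ ρ : Perm (Fin N), conjSum I X N (u * (embFin I X N ρ * v * (embFin I X N ρ)⁻¹)) := by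
  rw [conjSum, conjSum, sum_mul_sum]
  refine (sum_congr rfl fun σ _ => ?_).trans sum_comm
  refine Fintype.sum_equiv (Equiv.mulLeft σ).symm _ _ fun τ => ?_
  rw [← map_mul]
  congr 1
  simp only [Equiv.mulLeft_symm, Equiv.coe_mulLeft, embFin_mul, embFin_inv]
  group

lemma conjSum_mul_conjSum_eq_sum_conj_mul (N : ℕ) (u v : Perm (X ⊕ I × ℕ)) :
    conjSum I X N u * conjSum I X N v =
      ∑ ρ : Perm (Fin N), conjSum I X N ((embFin I X N ρ * u * (embFin I X N ρ)⁻¹) * v) := by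
  rw [conjSum, conjSum, sum_mul_sum, sum_comm]
  refine (sum_congr rfl fun τ _ => ?_).trans sum_comm
  refine Fintype.sum_equiv (Equiv.mulLeft τ).symm _ _ fun σ => ?_
  rw [← map_mul]
  congr 1
  simp only [Equiv.mulLeft_symm, Equiv.coe_mulLeft, embFin_mul, embFin_inv]
  group

def crossTerm (N : ℕ) (g h : Perm (X ⊕ I × ℕ)) (ρ : Perm (Fin N)) :
    MonoidAlgebra ℂ (Perm (X ⊕ I × ℕ)) :=
  conjSum I X N (g * (embFin I X N ρ * h * (embFin I X N ρ)⁻¹)) -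
    conjSum I X N ((embFin I X N ρ * h * (embFin I X N ρ)⁻¹) * g)

lemma AN_mul_AN_sub_AN_mul_AN {N n k : ℕ} (hn : n ≤ N) (hk : k ≤ N)
    (g h : Perm (X ⊕ I × ℕ)) :
    AN I X N n g * AN I X N k h - AN I X N k h * AN I X N n g =
      (((N - n)! : ℂ)⁻¹ * ((N - k)! : ℂ)⁻¹) • ∑ ρ, crossTerm N g h ρ := by
  rw [AN_eq_smul_conjSum hn, AN_eq_smul_conjSum hk, smul_mul_smul_comm, smul_mul_smul_comm,
    conjSum_mul_conjSum_eq_sum_mul_conj, conjSum_mul_conjSum_eq_sum_conj_mul,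
    mul_comm ((N - k)! : ℂ)⁻¹, ← smul_sub, ← sum_sub_distrib]
  rfl

/-- The graph of the partial bijection from `{0,…,k-1}` to `{0,…,n-1}` induced by `τ`;
its cardinality is the rank of that partial bijection. -/
def overlap (k n : ℕ) (τ : Perm ℕ) : Finset (Fin k × Fin n) :=
  {q | τ q.1 = q.2}

lemma overlap_eq_singleton_iff {k n : ℕ} {τ : Perm ℕ} {p : Fin k × Fin n} :
    overlap k n τ = {p} ↔ ∀ (i : Fin k) (j : Fin n), τ i = j ↔ i = p.1 ∧ j = p.2 := by
  simp [overlap, Finset.ext_iff, Prod.ext_iff]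

lemma disjoint_of_overlap_eq_empty {k n : ℕ} {τ : Perm ℕ} (hτ : overlap k n τ = ∅) :
    Disjoint {m | m < n} (τ '' {m | m < k}) := by
  refine Set.disjoint_left.2 fun m hm ⟨i, hi, hτi⟩ => ?_
  have : ((⟨i, hi⟩ : Fin k), (⟨m, hm⟩ : Fin n)) ∈ overlap k n τ := by simpa [overlap] using hτi
  simp [hτ] at this

lemma card_union_add_card_overlap (k n : ℕ) (τ : Perm ℕ) :
    #(range n ∪ (range k).image τ) + #(overlap k n τ) = n + k := by
  have hinter : #(range n ∩ (range k).image τ) = #(overlap k n τ) := by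
    refine (card_bij (fun q _ => (q.2 : ℕ)) (fun q hq => ?_) (fun q hq q' hq' hqq' => ?_)
      fun m hm => ?_).symm
    · simp only [overlap, mem_filter, mem_univ, true_and] at hq
      simp only [mem_inter, mem_range, mem_image]
      exact ⟨q.2.2, q.1, q.1.2, hq⟩
    · simp only [overlap, mem_filter, mem_univ, true_and] at hq hq'
      have h2 : q.2 = q'.2 := Fin.ext hqq'
      exact Prod.ext (Fin.ext (τ.injective (by rw [hq, hq', h2]))) h2
    · simp only [mem_inter, mem_range, mem_image] at hm
      obtain ⟨hmn, i, hik, hτi⟩ := hm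
      exact ⟨(⟨i, hik⟩, ⟨m, hmn⟩), by simpa [overlap] using hτi, rfl⟩
  rw [← hinter, card_union_add_card_inter, card_range, card_image_of_injective _ τ.injective,
    card_range]

lemma overlap_natPerm_eq_singleton_iff {N n k : ℕ} (hk : k ≤ N) (hn : n ≤ N)
    (ρ : Perm (Fin N)) (p : Fin k × Fin n) :
    overlap k n (natPerm ρ) = {p} ↔ (ρ ∘ Fin.castLE hk) p.1 = Fin.castLE hn p.2 ∧
      ∀ i ≠ p.1, (ρ ∘ Fin.castLE hk) i ∈ ({x : Fin N | n ≤ x} : Finset (Fin N)) := by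
  have hval : ∀ i : Fin k, natPerm ρ i = ρ (Fin.castLE hk i) :=
    fun i => natPerm_apply_of_lt ρ _
  have hp : (ρ ∘ Fin.castLE hk) p.1 = Fin.castLE hn p.2 ↔ natPerm ρ p.1 = p.2 := by
    rw [hval, Fin.ext_iff]
    rfl
  have hB : ∀ i, (ρ ∘ Fin.castLE hk) i ∈ ({x : Fin N | n ≤ x} : Finset (Fin N)) ↔
      n ≤ natPerm ρ i := by
    simp [hval]
  simp only [overlap_eq_singleton_iff, hp, hB]
  constructor
  · intro H
    exact ⟨(H p.1 p.2).2 ⟨rfl, rfl⟩, fun i hi => not_lt.1 fun hlt => hi ((H i ⟨_, hlt⟩).1 rfl).1⟩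
  · rintro ⟨h₁, h₂⟩ i j
    constructor
    · intro hij
      by_cases hi : i = p.1
      · subst hi
        exact ⟨rfl, Fin.ext (hij.symm.trans h₁)⟩
      · exact absurd (hij ▸ h₂ i hi) (not_le.2 j.2)
    · rintro ⟨rfl, rfl⟩
      exact h₁

lemma card_overlap_eq_singleton {N n k : ℕ} (hk : k ≤ N) (hn : n ≤ N) (p : Fin k × Fin n) :
    #{ρ : Perm (Fin N) | overlap k n (natPerm ρ) = {p}} =
      (N - n).descFactorial (k - 1) * (N - k)! := by
  have hB : #({x : Fin N | n ≤ x} : Finset (Fin N)) = N - n := by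
    have := card_filter_add_card_filter_not (s := univ) fun x : Fin N => (x : ℕ) < n
    simp only [Fin.card_filter_val_lt, not_lt, card_univ, Fintype.card_fin] at this
    omega
  rw [filter_congr fun ρ _ => overlap_natPerm_eq_singleton_iff hk hn ρ p,
    card_perm_filter_comp (Fin.castLE_injective hk) fun f => f p.1 = Fin.castLE hn p.2 ∧
      ∀ i ≠ p.1, f i ∈ ({x : Fin N | n ≤ x} : Finset (Fin N))]
  -- `convert` absorbs the clash between the instances `Nat.decidableForallFin` and
  -- `Fintype.decidableForallFintype` deciding the `∀ i ≠ p.1` clause.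
  convert congrArg (· * (N - k)!) (card_injective_apply_eq_and_mem p.1 (Fin.castLE hn p.2)
    {x : Fin N | n ≤ x} (by simp)) using 3 <;> simp [hB]

lemma inv_factorial_mul_inv_factorial_mul {N n k : ℕ} (hk : 0 < k) (hN : n + k - 1 ≤ N) :
    ((N - n)! : ℂ)⁻¹ * ((N - k)! : ℂ)⁻¹ * ((N - n).descFactorial (k - 1) * (N - k)! : ℕ) =
      ((N - (n + k - 1))! : ℂ)⁻¹ := by
  have hkn : k - 1 ≤ N - n := by omega
  have hd : ((N - n).descFactorial (k - 1) : ℂ) ≠ 0 :=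
    Nat.cast_ne_zero.2 (mt Nat.descFactorial_eq_zero_iff_lt.1 (not_lt.2 hkn))
  have h := Nat.factorial_mul_descFactorial hkn
  rw [show N - n - (k - 1) = N - (n + k - 1) by omega] at h
  have hf : ((N - k)! : ℂ) ≠ 0 := Nat.cast_ne_zero.2 (Nat.factorial_ne_zero _)
  rw [← h]
  push_cast
  field_simp

lemma conjSum_mem_span {Ginf : Subgroup (Perm (X ⊕ I × ℕ))}
    (hGS : ∀ τ : Perm ℕ, {m : ℕ | τ m ≠ m}.Finite → embNat I X τ ∈ Ginf)
    {N n k : ℕ} {u : Perm (X ⊕ I × ℕ)} (hu : u ∈ Ginf) {S : Finset ℕ} (hS : ∀ m ∈ S, m < N)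
    (huS : IsSupportedIn ↑S u) (hSnk : #S + 2 ≤ n + k) :
    conjSum I X N u ∈ Submodule.span ℂ
      {x | ∃ m : ℕ, m + 2 ≤ n + k ∧ ∃ r ∈ Gset Ginf m, x = AN I X N m r} := by
  let T : Finset (Fin N) := {x | (x : ℕ) ∈ S}
  have hT : #T = #S := by
    rw [← card_map Fin.valEmbedding]
    congr 1
    ext m
    simp only [T, mem_map, mem_filter, mem_univ, true_and, Fin.valEmbedding_apply]
    exact ⟨fun ⟨a, ha, ham⟩ => ham ▸ ha, fun hm => ⟨⟨m, hS m hm⟩, hm, rfl⟩⟩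
  have hSN : #S ≤ N := hT ▸ (card_le_univ T).trans_eq (Fintype.card_fin N)
  obtain ⟨π, hπ⟩ := Perm.exists_map_finset_eq T {x : Fin N | (x : ℕ) < #S}
    (by rw [hT, Fin.card_filter_val_lt, min_eq_right hSN])
  have hπS : natPerm π '' S ⊆ {m | m < #S} := by
    rintro _ ⟨m, hm, rfl⟩
    have : π ⟨m, hS m hm⟩ ∈ T.map π.toEmbedding := mem_map_of_mem _ (by simpa [T] using hm)
    rw [hπ] at this
    simpa [natPerm_apply_of_lt π (hS m hm)] using this
  have hπG : embNat I X (natPerm π) ∈ Ginf := embNat_mem hGS (natPerm_fixesFrom π)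
  have hv : embNat I X (natPerm π) * u * (embNat I X (natPerm π))⁻¹ ∈ Gset Ginf #S :=
    ⟨Ginf.mul_mem (Ginf.mul_mem hπG hu) (Ginf.inv_mem hπG),
      fun i m hm => ((huS.conj _).mono hπS) i m (not_lt.2 hm)⟩
  rw [← conjSum_conj π, conjSum_eq_smul_AN hSN]
  exact Submodule.smul_mem _ _ (Submodule.subset_span ⟨_, hSnk, _, hv, rfl⟩)

lemma crossTerm_mem_span {Ginf : Subgroup (Perm (X ⊕ I × ℕ))}
    (hGS : ∀ τ : Perm ℕ, {m : ℕ | τ m ≠ m}.Finite → embNat I X τ ∈ Ginf)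
    {N n k : ℕ} (hn : n ≤ N) (hk : k ≤ N) {g h : Perm (X ⊕ I × ℕ)} (hg : g ∈ Gset Ginf n)
    (hh : h ∈ Gset Ginf k) {ρ : Perm (Fin N)} (hρ : 2 ≤ #(overlap k n (natPerm ρ))) :
    crossTerm N g h ρ ∈ Submodule.span ℂ
      {x | ∃ m : ℕ, m + 2 ≤ n + k ∧ ∃ r ∈ Gset Ginf m, x = AN I X N m r} := by
  let S := range n ∪ (range k).image (natPerm ρ)
  have hS : ∀ m ∈ S, m < N := by
    simp only [S, mem_union, mem_range, mem_image]
    rintro m (hm | ⟨i, hi, rfl⟩)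
    · omega
    · exact natPerm_lt ρ (by omega)
  have hSnk : #S + 2 ≤ n + k := by
    have : #S + #(overlap k n (natPerm ρ)) = n + k := card_union_add_card_overlap k n _
    omega
  have hScoe : (↑S : Set ℕ) = {m | m < n} ∪ natPerm ρ '' {m | m < k} := by
    ext
    simp [S]
  have hgS := IsSupportedIn.of_mem_Gset hg
  have hhS := (IsSupportedIn.of_mem_Gset hh).conj (natPerm ρ)
  have hρG : embNat I X (natPerm ρ) ∈ Ginf := embNat_mem hGS (natPerm_fixesFrom ρ)
  have hρh : embNat I X (natPerm ρ) * h * (embNat I X (natPerm ρ))⁻¹ ∈ Ginf :=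
    Ginf.mul_mem (Ginf.mul_mem hρG hh.1) (Ginf.inv_mem hρG)
  rw [crossTerm, embFin_eq_embNat_natPerm]
  refine Submodule.sub_mem _ (conjSum_mem_span hGS (Ginf.mul_mem hg.1 hρh) hS ?_ hSnk)
    (conjSum_mem_span hGS (Ginf.mul_mem hρh hg.1) hS ?_ hSnk)
  · exact hScoe ▸ hgS.mul hhS
  · exact hScoe ▸ Set.union_comm _ _ ▸ hhS.mul hgS

section

variable [IsEmpty X]

lemma crossTerm_eq_zero_of_overlap_eq_empty {N n k : ℕ} {g h : Perm (X ⊕ I × ℕ)}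
    (hg : IsSupportedIn {m | m < n} g) (hh : IsSupportedIn {m | m < k} h)
    {ρ : Perm (Fin N)} (hρ : overlap k n (natPerm ρ) = ∅) : crossTerm N g h ρ = 0 := by
  rw [crossTerm, embFin_eq_embNat_natPerm,
    (hg.commute (hh.conj _) (disjoint_of_overlap_eq_empty hρ)).eq, sub_self]

/-- Two realizations of the same partial bijection give `K_N`-conjugate products. -/
lemma conjSum_conj_mul_conj_eq {N a b : ℕ} {u v : Perm (X ⊕ I × ℕ)}
    (hu : IsSupportedIn {m | m < a} u) (hv : IsSupportedIn {m | m < b} v)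
    {σ₁ τ₁ σ₂ τ₂ : Perm ℕ} (hσ₁ : ∀ j : Fin a, σ₁ j < N) (hτ₁ : ∀ i : Fin b, τ₁ i < N)
    (hσ₂ : ∀ j : Fin a, σ₂ j < N) (hτ₂ : ∀ i : Fin b, τ₂ i < N)
    (hpat : ∀ (i : Fin b) (j : Fin a), τ₁ i = σ₁ j ↔ τ₂ i = σ₂ j) :
    conjSum I X N ((embNat I X σ₁ * u * (embNat I X σ₁)⁻¹) *
        (embNat I X τ₁ * v * (embNat I X τ₁)⁻¹)) =
      conjSum I X N ((embNat I X σ₂ * u * (embNat I X σ₂)⁻¹) *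
        (embNat I X τ₂ * v * (embNat I X τ₂)⁻¹)) := by
  have hinj : ∀ {c : ℕ} {τ : Perm ℕ} (hτ : ∀ i : Fin c, τ i < N),
      Function.Injective fun i : Fin c => (⟨τ i, hτ i⟩ : Fin N) := by
    intro c τ hτ i j hij
    exact Fin.ext (τ.injective (Fin.ext_iff.1 hij))
  obtain ⟨π, hπσ, hπτ⟩ := exists_perm_extending_of_coincide (hinj hσ₁) (hinj hσ₂) (hinj hτ₁)
    (hinj hτ₂) fun i j => by simpa [Fin.ext_iff] using hpat i j
  have heqOn : ∀ {c : ℕ} {τ τ' : Perm ℕ} (hτ : ∀ i : Fin c, τ i < N)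
      (hτ' : ∀ i : Fin c, τ' i < N),
      (∀ i : Fin c, π ⟨τ i, hτ i⟩ = ⟨τ' i, hτ' i⟩) →
        Set.EqOn (natPerm π * τ) τ' {m | m < c} := by
    intro c τ τ' hτ hτ' h m hm
    simpa [natPerm_apply_of_lt π (hτ ⟨m, hm⟩), Fin.ext_iff] using h ⟨m, hm⟩
  rw [← conjSum_conj π, ← hu.conj_eq_conj (heqOn hσ₁ hσ₂ hπσ),
    ← hv.conj_eq_conj (heqOn hτ₁ hτ₂ hπτ)]
  simp only [embNat_mul, mul_inv_rev]
  group

lemma crossTerm_eq_of_overlap_eq_singleton {N n k : ℕ} (hn : n ≤ N) (hk : k ≤ N)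
    {g h : Perm (X ⊕ I × ℕ)} (hg : IsSupportedIn {m | m < n} g)
    (hh : IsSupportedIn {m | m < k} h) {ρ : Perm (Fin N)} {p : Fin k × Fin n}
    (hρ : overlap k n (natPerm ρ) = {p}) {s t s' t' : Perm ℕ}
    (hs : ∀ j : Fin n, s j < N) (ht : ∀ i : Fin k, t i < N)
    (hst : ∀ (i : Fin k) (j : Fin n), t i = s j ↔ i = p.1 ∧ j = p.2)
    (hs' : ∀ i : Fin k, s' i < N) (ht' : ∀ j : Fin n, t' j < N)
    (hst' : ∀ (j : Fin n) (i : Fin k), t' j = s' i ↔ j = p.2 ∧ i = p.1) :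
    crossTerm N g h ρ =
      conjSum I X N ((embNat I X s * g * (embNat I X s)⁻¹) *
          (embNat I X t * h * (embNat I X t)⁻¹)) -
        conjSum I X N ((embNat I X s' * h * (embNat I X s')⁻¹) *
          (embNat I X t' * g * (embNat I X t')⁻¹)) := by
  rw [overlap_eq_singleton_iff] at hρ
  -- `(1, natPerm ρ)` realizes `{p}`, as do `(s, t)` and, with the roles swapped, `(s', t')`.
  have hρN : ∀ i : Fin k, natPerm ρ i < N := fun i => natPerm_lt ρ (i.2.trans_le hk)
  have hoN : ∀ j : Fin n, (1 : Perm ℕ) j < N := fun j => j.2.trans_le hn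
  have h₁ := conjSum_conj_mul_conj_eq hg hh hs ht hoN hρN fun i j =>
    (hst i j).trans (hρ i j).symm
  have h₂ := conjSum_conj_mul_conj_eq hh hg hs' ht' hρN hoN fun j i =>
    (hst' j i).trans (and_comm.trans ((hρ i j).symm.trans eq_comm))
  simp only [embNat_one, one_mul, inv_one, mul_one] at h₁ h₂
  rw [crossTerm, embFin_eq_embNat_natPerm, h₁, h₂]

lemma smul_sum_crossTerm_eq_AN_sub_AN {N n k : ℕ} (hn : n ≤ N) (hk : k ≤ N)
    {g h : Perm (X ⊕ I × ℕ)} (hg : IsSupportedIn {m | m < n} g)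
    (hh : IsSupportedIn {m | m < k} h) (p : Fin k × Fin n) {s t s' t' : Perm ℕ}
    (hs : ∀ j : Fin n, s j < n + k - 1) (ht : ∀ i : Fin k, t i < n + k - 1)
    (hst : ∀ (i : Fin k) (j : Fin n), t i = s j ↔ i = p.1 ∧ j = p.2)
    (hs' : ∀ i : Fin k, s' i < n + k - 1) (ht' : ∀ j : Fin n, t' j < n + k - 1)
    (hst' : ∀ (j : Fin n) (i : Fin k), t' j = s' i ↔ j = p.2 ∧ i = p.1) :
    (((N - n)! : ℂ)⁻¹ * ((N - k)! : ℂ)⁻¹) •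
        ∑ ρ with overlap k n (natPerm ρ) = {p}, crossTerm N g h ρ =
      AN I X N (n + k - 1) ((embNat I X s * g * (embNat I X s)⁻¹) *
          (embNat I X t * h * (embNat I X t)⁻¹)) -
        AN I X N (n + k - 1) ((embNat I X s' * h * (embNat I X s')⁻¹) *
          (embNat I X t' * g * (embNat I X t')⁻¹)) := by
  have hk0 : 0 < k := p.1.pos
  rcases le_or_gt (n + k - 1) N with hN | hN
  · rw [sum_congr rfl fun ρ hρ => crossTerm_eq_of_overlap_eq_singleton hn hk hg hh
        (mem_filter.1 hρ).2 (fun j => (hs j).trans_le hN) (fun i => (ht i).trans_le hN) hst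
        (fun i => (hs' i).trans_le hN) (fun j => (ht' j).trans_le hN) hst',
      sum_const, card_overlap_eq_singleton hk hn p, AN_eq_smul_conjSum hN, AN_eq_smul_conjSum hN,
      ← smul_sub, ← Nat.cast_smul_eq_nsmul ℂ, smul_smul, inv_factorial_mul_inv_factorial_mul hk0 hN]
  · have hempty : #{ρ : Perm (Fin N) | overlap k n (natPerm ρ) = {p}} = 0 := by
      rw [card_overlap_eq_singleton hk hn p, Nat.descFactorial_eq_zero_iff_lt.2 (by omega),
        zero_mul]
    rw [card_eq_zero.1 hempty, sum_empty, smul_zero, AN_eq_zero hN, AN_eq_zero hN, sub_self]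

end

end CommutatorAN

open CommutatorAN in
theorem commutator_AN_top_term_general
    {I X : Type*} [IsEmpty X]
    (Ginf : Subgroup (Equiv.Perm (X ⊕ I × ℕ)))
    (hGS : ∀ τ : Equiv.Perm ℕ, {m : ℕ | τ m ≠ m}.Finite → embNat I X τ ∈ Ginf)
    (n k : ℕ) (g h : Equiv.Perm (X ⊕ I × ℕ))
    (hg : g ∈ Gset Ginf n) (hh : h ∈ Gset Ginf k) (N : ℕ)
    (w₁ w₂ : Fin k × Fin n → Equiv.Perm ℕ × Equiv.Perm ℕ)
    (hw₁ : ∀ p : Fin k × Fin n,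
      fixesFrom (n + k - 1) (w₁ p).1 ∧ fixesFrom (n + k - 1) (w₁ p).2 ∧
      (∀ j : Fin n, (w₁ p).1 (j : ℕ) < n + k - 1) ∧
      (∀ i : Fin k, (w₁ p).2 (i : ℕ) < n + k - 1) ∧
      (∀ (i : Fin k) (j : Fin n),
        (w₁ p).2 (i : ℕ) = (w₁ p).1 (j : ℕ) ↔ i = p.1 ∧ j = p.2))
    (hw₂ : ∀ p : Fin k × Fin n,
      fixesFrom (n + k - 1) (w₂ p).1 ∧ fixesFrom (n + k - 1) (w₂ p).2 ∧
      (∀ i : Fin k, (w₂ p).1 (i : ℕ) < n + k - 1) ∧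
      (∀ j : Fin n, (w₂ p).2 (j : ℕ) < n + k - 1) ∧
      (∀ (j : Fin n) (i : Fin k),
        (w₂ p).2 (j : ℕ) = (w₂ p).1 (i : ℕ) ↔ j = p.2 ∧ i = p.1)) :
    (AN I X N n g * AN I X N k h - AN I X N k h * AN I X N n g)
        - ∑ p : Fin k × Fin n,
            (AN I X N (n + k - 1)
                ((embNat I X (w₁ p).1 * g * (embNat I X (w₁ p).1)⁻¹) *
                  (embNat I X (w₁ p).2 * h * (embNat I X (w₁ p).2)⁻¹))
              - AN I X N (n + k - 1)
                  ((embNat I X (w₂ p).1 * h * (embNat I X (w₂ p).1)⁻¹) *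
                    (embNat I X (w₂ p).2 * g * (embNat I X (w₂ p).2)⁻¹)))
      ∈ Submodule.span ℂ
          {x : MonoidAlgebra ℂ (Equiv.Perm (X ⊕ I × ℕ)) |
            ∃ m : ℕ, m + 2 ≤ n + k ∧ ∃ r ∈ Gset Ginf m, x = AN I X N m r} := by
  by_cases hN : n ≤ N ∧ k ≤ N
  · obtain ⟨hn, hk⟩ := hN
    have hgS := IsSupportedIn.of_mem_Gset hg
    have hhS := IsSupportedIn.of_mem_Gset hh
    rw [AN_mul_AN_sub_AN_mul_AN hn hk, sum_eq_sum_sum_eq_singleton_add_sum_two_le _ _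
        fun ρ => crossTerm_eq_zero_of_overlap_eq_empty hgS hhS, smul_add, smul_sum,
      sum_congr rfl fun p _ => smul_sum_crossTerm_eq_AN_sub_AN hn hk hgS hhS p
        (hw₁ p).2.2.1 (hw₁ p).2.2.2.1 (hw₁ p).2.2.2.2 (hw₂ p).2.2.1 (hw₂ p).2.2.2.1
        (hw₂ p).2.2.2.2, add_sub_cancel_left]
    exact Submodule.smul_mem _ _ <| Submodule.sum_mem _ fun ρ hρ =>
      crossTerm_mem_span hGS hn hk hg hh (mem_filter.1 hρ).2
  · have htop : ∀ p : Fin k × Fin n, N < n + k - 1 := fun p => by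
      have := p.1.pos; have := p.2.pos; omega
    have hcomm : AN I X N n g * AN I X N k h - AN I X N k h * AN I X N n g = 0 := by
      rcases not_and_or.1 hN with hN | hN <;> simp [AN_eq_zero (not_le.1 hN)]
    rw [hcomm, sum_eq_zero fun p _ => by rw [AN_eq_zero (htop p), AN_eq_zero (htop p), sub_self],
      sub_zero]
    exact Submodule.zero_mem _

/-- Suppose `X = ∅`.  For `g ∈ G_n`, `h ∈ G_k` and every `N`, the commutator
`A_N[n,g] * A_N[k,h] − A_N[k,h] * A_N[n,g]` differs from
`Σ_λ ( A_N[n+k−1, g ⊛_λ h] − A_N[n+k−1, h ⊛_{λ⁻¹} g] )` — the sum over all rank-one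
partial bijections `λ` from `{0,…,k−1}` to `{0,…,n−1}`, i.e. over all pairs `(α,β)` with
`α ∈ {0,…,k−1}`, `β ∈ {0,…,n−1}` — by an element of the complex linear span of the
elements `A_N[m,r]` with `m ≤ n + k − 2` (i.e. `m + 2 ≤ n + k`) and `r ∈ G_m`.
Here `g ⊛_λ h = (s g s⁻¹)(t h t⁻¹)` and `h ⊛_{λ⁻¹} g = (s' h s'⁻¹)(t' g t'⁻¹)` are
computed from arbitrary realizations `(s,t) = w₁(α,β)` and `(s',t') = w₂(α,β)` of `λ` and
of the inverse partial bijection `λ⁻¹`. -/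
theorem commutator_AN_top_term
    {I X : Type*} [Finite I] [IsEmpty X]
    (Ginf : Subgroup (Equiv.Perm (X ⊕ I × ℕ)))
    (hGfs : ∀ g ∈ Ginf, {v : X ⊕ I × ℕ | g v ≠ v}.Finite)
    (hGS : ∀ τ : Equiv.Perm ℕ, {m : ℕ | τ m ≠ m}.Finite → embNat I X τ ∈ Ginf)
    (n k : ℕ) (g h : Equiv.Perm (X ⊕ I × ℕ))
    (hg : g ∈ Gset Ginf n) (hh : h ∈ Gset Ginf k) (N : ℕ)
    (w₁ w₂ : Fin k × Fin n → Equiv.Perm ℕ × Equiv.Perm ℕ)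
    (hw₁ : ∀ p : Fin k × Fin n,
      fixesFrom (n + k - 1) (w₁ p).1 ∧ fixesFrom (n + k - 1) (w₁ p).2 ∧
      (∀ j : Fin n, (w₁ p).1 (j : ℕ) < n + k - 1) ∧
      (∀ i : Fin k, (w₁ p).2 (i : ℕ) < n + k - 1) ∧
      (∀ (i : Fin k) (j : Fin n),
        (w₁ p).2 (i : ℕ) = (w₁ p).1 (j : ℕ) ↔ i = p.1 ∧ j = p.2))
    (hw₂ : ∀ p : Fin k × Fin n,
      fixesFrom (n + k - 1) (w₂ p).1 ∧ fixesFrom (n + k - 1) (w₂ p).2 ∧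
      (∀ i : Fin k, (w₂ p).1 (i : ℕ) < n + k - 1) ∧
      (∀ j : Fin n, (w₂ p).2 (j : ℕ) < n + k - 1) ∧
      (∀ (j : Fin n) (i : Fin k),
        (w₂ p).2 (j : ℕ) = (w₂ p).1 (i : ℕ) ↔ j = p.2 ∧ i = p.1)) :
    (AN I X N n g * AN I X N k h - AN I X N k h * AN I X N n g)
        - ∑ p : Fin k × Fin n,
            (AN I X N (n + k - 1)
                ((embNat I X (w₁ p).1 * g * (embNat I X (w₁ p).1)⁻¹) *
                  (embNat I X (w₁ p).2 * h * (embNat I X (w₁ p).2)⁻¹))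
              - AN I X N (n + k - 1)
                  ((embNat I X (w₂ p).1 * h * (embNat I X (w₂ p).1)⁻¹) *
                    (embNat I X (w₂ p).2 * g * (embNat I X (w₂ p).2)⁻¹)))
      ∈ Submodule.span ℂ
          {x : MonoidAlgebra ℂ (Equiv.Perm (X ⊕ I × ℕ)) |
            ∃ m : ℕ, m + 2 ≤ n + k ∧ ∃ r ∈ Gset Ginf m, x = AN I X N m r} :=
  commutator_AN_top_term_general Ginf hGS n k g h hg hh N w₁ w₂ hw₁ hw₂

end
end
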